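/- arXiv:2405.05153 — 7 statements merged into one kernel-verified Lean document; each statement's English description precedes it below -/
import Mathlib

section
/- Let A be a commutative ring, I an A-module, and i : I → A an A-linear map such that i(x) • y = i(y) • x for all x, y ∈ I. Then the operation x * y := i(x) • y makes I a non-unital commutative ring (the multiplication is additive in each variable, commutative, and associative), this multiplication is A-bilinear (a • (x * y) = (a • x) * y = x * (a • y) for a ∈ A), and i is multiplicative: i(x * y) = i(x) · i(y) for all x, y ∈ I. -/
/-- A Smith ideal `i : I → A` (an `A`-linear map with `i x • y = i y • x`)
carries a canonical non-unital commutative multiplication `x * y := i x • y`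
which is `A`-bilinear and for which `i` is multiplicative. -/
theorem smith_ideal_nonunital_structure
    (A : Type*) [CommRing A] (I : Type*) [AddCommGroup I] [Module A I]
    (i : I →ₗ[A] A) (h : ∀ x y : I, i x • y = i y • x) :
    (∀ x y z : I, i (x + y) • z = i x • z + i y • z) ∧
    (∀ x y z : I, i x • (y + z) = i x • y + i x • z) ∧
    (∀ x y : I, i x • y = i y • x) ∧
    (∀ x y z : I, i (i x • y) • z = i x • (i y • z)) ∧
    (∀ (a : A) (x y : I), i (a • x) • y = a • (i x • y)) ∧
    (∀ (a : A) (x y : I), i x • (a • y) = a • (i x • y)) ∧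
    (∀ x y : I, i (i x • y) = i x * i y) := by
  refine ⟨fun x y z => by rw [map_add, add_smul],
    fun x y z => smul_add _ _ _,
    h,
    fun x y z => by rw [map_smul, smul_eq_mul, mul_smul, smul_comm],
    fun a x y => by rw [map_smul, smul_eq_mul, mul_smul],
    fun a x y => smul_comm _ _ _,
    fun x y => by rw [map_smul, smul_eq_mul]⟩
end

section
/- Let D denote the ℤ-submodule of ℚ[X] spanned by {X^n / n! : n ∈ ℕ}, which is a subring of ℚ[X], and let D⁺ denote the ℤ-submodule spanned by {X^n / n! : n ≥ 1}. Then D⁺ is an ideal of D, and there exists a divided power structure δ on the ideal D⁺ of D satisfying n! · δ_n(f) = f^n for all f ∈ D⁺ and all n ∈ ℕ; in particular δ_m(X^n / n!) = ((mn)! / ((n!)^m · m!)) · X^{mn} / (mn)! for all m ∈ ℕ and n ≥ 1. -/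
open Polynomial

/-- The divided power `X ^ n / n!` in `ℚ[X]`. -/
noncomputable def divPow (n : ℕ) : Polynomial ℚ := ((n.factorial : ℚ))⁻¹ • X ^ n

/-- `D`: the `ℤ`-span of all divided powers `X ^ n / n!` (the free divided power ring `ℤ⟨x⟩`). -/
noncomputable def Dspan : Submodule ℤ (Polynomial ℚ) :=
  Submodule.span ℤ (Set.range divPow)

/-- `D⁺`: the `ℤ`-span of the divided powers `X ^ n / n!` with `n ≥ 1`
(the augmentation ideal of `ℤ⟨x⟩`). -/
noncomputable def DplusSpan : Submodule ℤ (Polynomial ℚ) :=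
  Submodule.span ℤ (divPow '' {n : ℕ | 1 ≤ n})


lemma fact_cast_ne (n : ℕ) : (n.factorial : ℚ) ≠ 0 := by
  exact_mod_cast n.factorial_ne_zero

lemma choose_fact_eq {a b : ℕ} :
    ((a + b).choose a : ℚ) = ((a+b).factorial : ℚ) / (a.factorial * b.factorial) := by
  rw [eq_div_iff (by positivity)]
  exact_mod_cast congrArg (Nat.cast : ℕ → ℚ)
    (by rw [← Nat.add_choose_mul_factorial_mul_factorial a b, mul_assoc,
      Nat.choose_symm_of_eq_add (rfl : a + b = a + b)])

lemma divPow_mul (a b : ℕ) :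
    divPow a * divPow b = ((a + b).choose a : ℤ) • divPow (a + b) := by
  simp only [divPow, smul_mul_smul_comm, ← pow_add]
  rw [← Int.cast_smul_eq_zsmul ℚ, smul_smul]
  congr 1
  push_cast
  rw [choose_fact_eq]
  field_simp

lemma mem_D_of_mem_plus {f : Polynomial ℚ} (h : f ∈ DplusSpan) : f ∈ Dspan :=
  Submodule.span_mono (by rintro _ ⟨n, -, rfl⟩; exact ⟨n, rfl⟩) h

lemma one_mem_D : (1 : Polynomial ℚ) ∈ Dspan := by
  have : divPow 0 = 1 := by simp [divPow]
  exact this ▸ Submodule.subset_span ⟨0, rfl⟩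

lemma mul_mem_plus {x y : Polynomial ℚ} (hx : x ∈ Dspan) (hy : y ∈ DplusSpan) :
    x * y ∈ DplusSpan := by
  induction hx using Submodule.span_induction with
  | mem u hu =>
    obtain ⟨a, rfl⟩ := hu
    induction hy using Submodule.span_induction with
    | mem v hv =>
      obtain ⟨b, hb, rfl⟩ := hv
      rw [divPow_mul]
      exact Submodule.smul_mem _ _ (Submodule.subset_span ⟨a + b, by simpa using hb.trans (Nat.le_add_left b a), rfl⟩)
    | zero => simp
    | add u v hu hv hu' hv' => rw [mul_add]; exact add_mem hu' hv'
    | smul c u hu hu' => rw [mul_smul_comm]; exact Submodule.smul_mem _ _ hu'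
  | zero => simp
  | add u v hu hv hu' hv' => rw [add_mul]; exact add_mem hu' hv'
  | smul c u hu hu' => rw [smul_mul_assoc]; exact Submodule.smul_mem _ _ hu'

lemma mul_mem_D {x y : Polynomial ℚ} (hx : x ∈ Dspan) (hy : y ∈ Dspan) :
    x * y ∈ Dspan := by
  induction hx using Submodule.span_induction with
  | mem u hu =>
    obtain ⟨a, rfl⟩ := hu
    induction hy using Submodule.span_induction with
    | mem v hv =>
      obtain ⟨b, rfl⟩ := hv
      rw [divPow_mul]
      exact Submodule.smul_mem _ _ (Submodule.subset_span ⟨a + b, rfl⟩)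
    | zero => simp
    | add u v hu hv hu' hv' => rw [mul_add]; exact add_mem hu' hv'
    | smul c u hu hu' => rw [mul_smul_comm]; exact Submodule.smul_mem _ _ hu'
  | zero => simp
  | add u v hu hv hu' hv' => rw [add_mul]; exact add_mem hu' hv'
  | smul c u hu hu' => rw [smul_mul_assoc]; exact Submodule.smul_mem _ _ hu'

lemma divPow_pow (m k : ℕ) (hk : k ≠ 0) :
    ((m.factorial : ℚ))⁻¹ • (divPow k) ^ m = (Nat.uniformBell m k : ℚ) • divPow (m * k) := by
  simp only [divPow, _root_.smul_pow, ← pow_mul, smul_smul, mul_comm k m]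
  congr 1
  have hfac : ((m * k).factorial : ℚ) = (Nat.uniformBell m k : ℚ) * (k.factorial : ℚ) ^ m * (m.factorial : ℚ) := by
    exact_mod_cast congrArg (Nat.cast : ℕ → ℚ) (Nat.uniformBell_mul_eq m hk).symm
  have hb : (Nat.uniformBell m k : ℚ) ≠ 0 := by
    intro h0
    have := hfac
    rw [h0, zero_mul, zero_mul] at this
    exact fact_cast_ne _ this
  rw [hfac, inv_pow]
  field_simp

lemma binom_key {x y : Polynomial ℚ} {n k : ℕ} (hkn : k ≤ n) :
    ((n.factorial : ℚ))⁻¹ • (x ^ k * y ^ (n - k) * (n.choose k : ℚ[X])) =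
      (((k.factorial : ℚ))⁻¹ • x ^ k) * ((((n - k).factorial : ℚ))⁻¹ • y ^ (n - k)) := by
  rw [smul_mul_smul_comm, ← Polynomial.C_eq_natCast, mul_comm (x ^ k * y ^ (n - k)) _,
    ← Polynomial.smul_eq_C_mul, smul_smul]
  congr 1
  have h := Nat.choose_mul_factorial_mul_factorial hkn
  have h' : ((n.choose k : ℚ)) * k.factorial * (n - k).factorial = n.factorial := by
    exact_mod_cast congrArg (Nat.cast : ℕ → ℚ) h
  field_simp
  linear_combination h'

lemma inv_fact_pow_mem {f : Polynomial ℚ} (hf : f ∈ DplusSpan) :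
    ∀ n, 1 ≤ n → ((n.factorial : ℚ))⁻¹ • f ^ n ∈ DplusSpan := by
  induction hf using Submodule.span_induction with
  | mem u hu =>
    obtain ⟨k, hk, rfl⟩ := hu
    intro n hn
    simp only [Set.mem_setOf_eq] at hk
    rw [divPow_pow n k (by omega)]
    have hcast : ((Nat.uniformBell n k : ℚ)) • divPow (n * k)
        = (Nat.uniformBell n k : ℤ) • divPow (n * k) := by
      rw [← Int.cast_smul_eq_zsmul ℚ]
      norm_num
    rw [hcast]
    exact Submodule.smul_mem _ _ (Submodule.subset_span
      ⟨n * k, Nat.one_le_iff_ne_zero.mpr (Nat.mul_ne_zero (by omega) (by omega)), rfl⟩)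
  | zero => intro n hn; rw [zero_pow (by omega), smul_zero]; exact zero_mem _
  | add x y hx hy hx' hy' =>
    intro n hn
    have hsec : ∀ j, ((j.factorial : ℚ))⁻¹ • y ^ j ∈ Dspan := by
      intro j
      cases j with
      | zero => simpa [Nat.factorial] using one_mem_D
      | succ j => exact mem_D_of_mem_plus (hy' _ (Nat.succ_le_succ (Nat.zero_le j)))
    rw [add_pow, Finset.smul_sum]
    apply Submodule.sum_mem
    intro k hk
    have hkn : k ≤ n := Nat.lt_succ_iff.mp (Finset.mem_range.mp hk)
    rw [binom_key hkn]
    cases Nat.eq_zero_or_pos k with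
    | inl h0 =>
      subst h0
      simpa [Nat.factorial] using hy' n hn
    | inr hpos =>
      rw [mul_comm]
      exact mul_mem_plus (hsec _) (hx' k hpos)
  | smul c x hx hx' =>
    intro n hn
    rw [_root_.smul_pow, smul_comm]
    exact Submodule.smul_mem _ _ (hx' n hn)

lemma natCast_mul_eq_smul (k : ℕ) (p : Polynomial ℚ) :
    (k : Polynomial ℚ) * p = (k : ℚ) • p := by
  rw [← Polynomial.C_eq_natCast, ← Polynomial.smul_eq_C_mul]

/-- The subring `D`. -/
noncomputable def Dring : Subring (Polynomial ℚ) where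
  carrier := Dspan
  mul_mem' := mul_mem_D
  one_mem' := one_mem_D
  add_mem' := fun h1 h2 => add_mem h1 h2
  zero_mem' := zero_mem _
  neg_mem' := fun h => neg_mem h

/-- The ideal `D⁺` of `D`. -/
noncomputable def Jideal : Ideal Dring where
  carrier := {x | (x : Polynomial ℚ) ∈ DplusSpan}
  add_mem' := fun {a b} h1 h2 => show ((a + b : Dring) : Polynomial ℚ) ∈ DplusSpan by
    rw [Subring.coe_add]; exact add_mem h1 h2
  zero_mem' := show ((0 : Dring) : Polynomial ℚ) ∈ DplusSpan by
    rw [ZeroMemClass.coe_zero]; exact zero_mem _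
  smul_mem' := fun c x hx => show ((c • x : Dring) : Polynomial ℚ) ∈ DplusSpan by
    rw [smul_eq_mul, Subring.coe_mul]; exact mul_mem_plus c.2 hx

lemma mem_Jideal {x : Dring} : x ∈ Jideal ↔ (x : Polynomial ℚ) ∈ DplusSpan := Iff.rfl

open Classical in

/-- The divided power operation. -/
noncomputable def ddpow (n : ℕ) (f : Dring) : Dring :=
  if h : (f : Polynomial ℚ) ∈ DplusSpan then
    ⟨((n.factorial : ℚ))⁻¹ • (f : Polynomial ℚ) ^ n, by
      cases n with
      | zero => simpa [Nat.factorial] using one_mem_D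
      | succ n => exact mem_D_of_mem_plus (inv_fact_pow_mem h _ (Nat.succ_le_succ (Nat.zero_le n)))⟩
  else 0

lemma ddpow_coe {n : ℕ} {f : Dring} (h : (f : Polynomial ℚ) ∈ DplusSpan) :
    ((ddpow n f : Dring) : Polynomial ℚ) = ((n.factorial : ℚ))⁻¹ • (f : Polynomial ℚ) ^ n := by
  rw [ddpow, dif_pos h]

lemma comp_scalar (m : ℕ) {n : ℕ} (hn : n ≠ 0) :
    ((m.factorial : ℚ))⁻¹ * (((n.factorial : ℚ))⁻¹) ^ m
      = (Nat.uniformBell m n : ℚ) * (((m * n).factorial : ℚ))⁻¹ := by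
  have hfac : ((m * n).factorial : ℚ)
      = (Nat.uniformBell m n : ℚ) * (n.factorial : ℚ) ^ m * (m.factorial : ℚ) := by
    exact_mod_cast congrArg (Nat.cast : ℕ → ℚ) (Nat.uniformBell_mul_eq m hn).symm
  have hb : (Nat.uniformBell m n : ℚ) ≠ 0 := by
    intro h0
    rw [h0, zero_mul, zero_mul] at hfac
    exact fact_cast_ne _ hfac
  rw [hfac, inv_pow]
  field_simp

/-- The divided power structure on `Jideal`. -/
noncomputable def delta : DividedPowers Jideal where
  dpow := ddpow
  dpow_null {n x} hx := by rw [ddpow, dif_neg (fun h => hx (mem_Jideal.mpr h))]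
  dpow_zero {x} hx := by
    apply Subtype.ext
    rw [ddpow_coe (mem_Jideal.mp hx)]
    simp [Nat.factorial]
  dpow_one {x} hx := by
    apply Subtype.ext
    rw [ddpow_coe (mem_Jideal.mp hx)]
    simp [Nat.factorial]
  dpow_mem {n x} hn hx := by
    rw [mem_Jideal, ddpow_coe (mem_Jideal.mp hx)]
    exact inv_fact_pow_mem (mem_Jideal.mp hx) n (Nat.one_le_iff_ne_zero.mpr hn)
  dpow_add n {x y} hx hy := by
    have hx' := mem_Jideal.mp hx
    have hy' := mem_Jideal.mp hy
    have hxy : ((x + y : Dring) : Polynomial ℚ) ∈ DplusSpan := by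
      rw [Subring.coe_add]; exact add_mem hx' hy'
    apply Subtype.ext
    rw [ddpow_coe hxy, Subring.coe_add, AddSubmonoidClass.coe_finset_sum,
      Finset.Nat.sum_antidiagonal_eq_sum_range_succ_mk, add_pow, Finset.smul_sum]
    refine Finset.sum_congr rfl fun k hk => ?_
    rw [binom_key (Nat.lt_succ_iff.mp (Finset.mem_range.mp hk)), Subring.coe_mul,
      ddpow_coe hx', ddpow_coe hy']
  dpow_mul n {a x} hx := by
    have hx' := mem_Jideal.mp hx
    have hax : ((a * x : Dring) : Polynomial ℚ) ∈ DplusSpan := by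
      rw [Subring.coe_mul]; exact mul_mem_plus a.2 hx'
    apply Subtype.ext
    rw [Subring.coe_mul, ddpow_coe hax, ddpow_coe hx', Subring.coe_mul,
      SubmonoidClass.coe_pow, mul_smul_comm, mul_pow]
  mul_dpow m n {x} hx := by
    have hx' := mem_Jideal.mp hx
    apply Subtype.ext
    rw [Subring.coe_mul, ddpow_coe hx', ddpow_coe hx', Subring.coe_mul, ddpow_coe hx',
      Subring.coe_natCast, natCast_mul_eq_smul, smul_smul,
      smul_mul_smul_comm, ← pow_add]
    congr 1
    rw [choose_fact_eq]
    field_simp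
  dpow_comp m {n x} hn hx := by
    have hx' := mem_Jideal.mp hx
    have h1 : ((ddpow n x : Dring) : Polynomial ℚ) ∈ DplusSpan := by
      rw [ddpow_coe hx']
      exact inv_fact_pow_mem hx' n (Nat.one_le_iff_ne_zero.mpr hn)
    apply Subtype.ext
    rw [ddpow_coe h1, ddpow_coe hx', Subring.coe_mul, ddpow_coe hx',
      Subring.coe_natCast, natCast_mul_eq_smul, smul_smul,
      _root_.smul_pow, ← pow_mul, smul_smul, comp_scalar m hn, mul_comm n m]

/-- `D⁺` is an ideal of `D` and carries a divided power structure `δ` with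
`n! * δ_n f = f ^ n`, satisfying
`δ_m (X^n/n!) = ((m*n)! / ((n!)^m * m!)) * X^(m*n)/(m*n)!`. -/
theorem exists_dividedPowers_on_Dplus :
    ∃ S : Subring (Polynomial ℚ), (S : Set (Polynomial ℚ)) = (Dspan : Set (Polynomial ℚ)) ∧
    ∃ J : Ideal S, (∀ x : S, x ∈ J ↔ (x : Polynomial ℚ) ∈ DplusSpan) ∧
    ∃ δ : DividedPowers J,
      (∀ (n : ℕ) (f : S), f ∈ J → (n.factorial : S) * δ.dpow n f = f ^ n) ∧
      (∀ (m n : ℕ), 1 ≤ n → ∀ f : S, (f : Polynomial ℚ) = divPow n →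
        ((δ.dpow m f : S) : Polynomial ℚ) =
          ((((m * n).factorial / (n.factorial ^ m * m.factorial) : ℕ) : ℚ)) •
            divPow (m * n)) := by
  refine ⟨Dring, rfl, Jideal, fun x => mem_Jideal, delta, ?_, ?_⟩
  · intro n f hf
    apply Subtype.ext
    rw [Subring.coe_mul, Subring.coe_natCast]
    show (n.factorial : Polynomial ℚ) * ((ddpow n f : Dring) : Polynomial ℚ) = _
    rw [ddpow_coe (mem_Jideal.mp hf), natCast_mul_eq_smul, smul_smul,
      mul_inv_cancel₀ (fact_cast_ne n), one_smul, SubmonoidClass.coe_pow]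
  · intro m n hn f hfc
    have hf : (f : Polynomial ℚ) ∈ DplusSpan := hfc ▸ Submodule.subset_span ⟨n, hn, rfl⟩
    show ((ddpow m f : Dring) : Polynomial ℚ) = _
    rw [ddpow_coe hf, hfc, divPow_pow m n (by omega), ← Nat.uniformBell_eq_div m (by omega)]
end

section
/- Let D⁺ denote the ℤ-submodule of ℚ[X] spanned by {X^n / n! : n ≥ 1}, regarded as a non-unital commutative ring with the multiplication inherited from ℚ[X]. For any non-unital commutative ring A, the assignment φ ↦ (φ(X^n / n!))_{n ≥ 1} is a bijection from the set of non-unital ring homomorphisms D⁺ → A onto the set of divided power sequences in A. -/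
/-!
`D⁺` is a free `ℤ`-module on the divided powers `X ^ n / n!` (`n ≥ 1`), which are linearly
independent already over `ℚ`, and their products are `X ^ m / m! * X ^ n / n! =
C(m + n, m) • X ^ (m + n) / (m + n)!`. A multiplicative additive map out of a ring with a
`ℤ`-basis is determined by its values on the basis, and those values may be any family
satisfying the same structure constants, since multiplicativity of the linear extension is a
bilinear identity that can be checked on pairs of basis vectors.
-/

open Polynomial

namespace Module.Basis

variable {ι R A : Type*} [NonUnitalNonAssocRing R] [NonUnitalNonAssocRing A]
  (b : Basis ι ℤ R) {c : ι → ι → ℕ} {μ : ι → ι → ι}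

theorem constr_mul (hb : ∀ i j, b i * b j = c i j • b (μ i j)) (x : ι → A)
    (hx : ∀ i j, x i * x j = c i j • x (μ i j)) (r s : R) :
    b.constr ℤ x (r * s) = b.constr ℤ x r * b.constr ℤ x s := by
  have : (LinearMap.mul ℤ R).compr₂ (b.constr ℤ x) =
      (LinearMap.mul ℤ A).compl₁₂ (b.constr ℤ x) (b.constr ℤ x) :=
    b.ext fun i ↦ b.ext fun j ↦ by simp [hb, hx]
  exact LinearMap.congr_fun₂ this r s

noncomputable def nonUnitalRingHomEquiv (hb : ∀ i j, b i * b j = c i j • b (μ i j)) :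
    (R →ₙ+* A) ≃ {x : ι → A // ∀ i j, x i * x j = c i j • x (μ i j)} where
  toFun φ := ⟨fun i ↦ φ (b i), fun i j ↦ by rw [← map_mul, hb, map_nsmul]⟩
  invFun x :=
    { toFun := b.constr ℤ x.1
      map_zero' := map_zero _
      map_add' := map_add _
      map_mul' := b.constr_mul hb x.1 x.2 }
  left_inv φ := by
    ext r
    exact LinearMap.congr_fun (b.ext fun i ↦ b.constr_basis ℤ _ i :
      b.constr ℤ (fun i ↦ φ (b i)) = φ.toAddMonoidHom.toIntLinearMap) r
  right_inv x := Subtype.ext <| funext <| b.constr_basis ℤ x.1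

theorem nonUnitalRingHomEquiv_apply (hb : ∀ i j, b i * b j = c i j • b (μ i j))
    (φ : R →ₙ+* A) (i : ι) : (b.nonUnitalRingHomEquiv hb φ).1 i = φ (b i) := rfl

end Module.Basis

theorem divPow_mul_divPow (m n : ℕ) :
    divPow m * divPow n = (m + n).choose m • divPow (m + n) := by
  have hfact : ((m + n).choose n : ℚ) * m.factorial * n.factorial = (m + n).factorial := by
    exact_mod_cast Nat.add_choose_mul_factorial_mul_factorial m n
  have hchoose : ((m + n).choose n : ℚ) ≠ 0 :=
    Nat.cast_ne_zero.mpr (Nat.choose_pos (Nat.le_add_left n m)).ne'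
  simp only [divPow, smul_mul_smul_comm, ← pow_add, ← Nat.cast_smul_eq_nsmul ℚ, smul_smul]
  rw [Nat.choose_symm_add, ← hfact]
  field_simp

theorem linearIndependent_divPow : LinearIndependent ℤ divPow := by
  have hmonomial := (basisMonomials ℚ).linearIndependent.units_smul
    fun n ↦ Units.mk0 ((n.factorial : ℚ)⁻¹) (by positivity)
  convert hmonomial.restrict_scalars' ℤ using 1
  ext n : 1
  simp [divPow, Units.smul_def, X_pow_eq_monomial]

theorem DplusSpan_eq_span_range :
    DplusSpan = Submodule.span ℤ (Set.range (divPow ∘ Subtype.val : {n : ℕ // 1 ≤ n} → _)) := by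
  rw [DplusSpan, Set.image_eq_range]
  rfl

theorem DplusSpan_mul_le : DplusSpan * DplusSpan ≤ DplusSpan := by
  rw [DplusSpan, Submodule.span_mul_span, Submodule.span_le]
  rintro _ ⟨_, ⟨m, hm, rfl⟩, _, ⟨n, -, rfl⟩, rfl⟩
  dsimp only
  rw [divPow_mul_divPow]
  exact nsmul_mem (Submodule.subset_span (Set.mem_image_of_mem divPow (le_add_right hm))) _

noncomputable def Dplus : NonUnitalSubring (Polynomial ℚ) :=
  (DplusSpan.toNonUnitalSubalgebra fun _ _ hp hq ↦
    DplusSpan_mul_le (Submodule.mul_mem_mul hp hq)).toNonUnitalSubring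

noncomputable def Dplus.basis : Module.Basis {n : ℕ // 1 ≤ n} ℤ Dplus :=
  (Module.Basis.span (linearIndependent_divPow.comp _ Subtype.val_injective)).map
    (AddEquiv.toIntLinearEquiv
      { Equiv.subtypeEquivRight fun p ↦ by rw [← DplusSpan_eq_span_range]; rfl with
        map_add' := fun _ _ ↦ rfl })

theorem Dplus.coe_basis (n : {n : ℕ // 1 ≤ n}) : (Dplus.basis n : Polynomial ℚ) = divPow n := by
  simp only [Dplus.basis, Module.Basis.map_apply, Module.Basis.span_apply]
  rfl

theorem Dplus.basis_mul (m n : {n : ℕ // 1 ≤ n}) :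
    Dplus.basis m * Dplus.basis n =
      ((m : ℕ) + n).choose m • Dplus.basis (⟨m + n, le_add_right m.2⟩ : {n : ℕ // 1 ≤ n}) := by
  ext
  simp [Dplus.coe_basis, divPow_mul_divPow]

/-- Maps out of the free non-unital divided power ring `ℤ⟨x⟩⁺` into any non-unital
commutative ring `A` are in bijection with divided power sequences in `A`,
via `φ ↦ (φ (X^n/n!))_{n ≥ 1}`. -/
theorem nonUnitalHom_equiv_dpSequence :
    ∃ T : NonUnitalSubring (Polynomial ℚ),
      (T : Set (Polynomial ℚ)) = (DplusSpan : Set (Polynomial ℚ)) ∧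
      ∀ (A : Type) [NonUnitalCommRing A],
        ∃ e : (T →ₙ+* A) ≃
            {x : {n : ℕ // 1 ≤ n} → A //
              ∀ m n : {n : ℕ // 1 ≤ n},
                x m * x n = (((m : ℕ) + (n : ℕ)).choose m) •
                  x ⟨(m : ℕ) + (n : ℕ), le_trans m.2 (Nat.le_add_right _ _)⟩},
          ∀ (φ : T →ₙ+* A) (n : {n : ℕ // 1 ≤ n}) (f : T),
            (f : Polynomial ℚ) = divPow n → (e φ).1 n = φ f := by
  refine ⟨Dplus, rfl, fun A _ ↦ ⟨Dplus.basis.nonUnitalRingHomEquiv Dplus.basis_mul, ?_⟩⟩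
  intro φ n f hf
  obtain rfl : f = Dplus.basis n := Subtype.ext (hf.trans (Dplus.coe_basis n).symm)
  exact Dplus.basis.nonUnitalRingHomEquiv_apply Dplus.basis_mul φ n
end

section
/- Let p be a prime and ℤ_p the ring of p-adic integers. There exists a divided power structure δ on the principal ideal (p) of ℤ_p such that n! · δ_n(x) = x^n for all x ∈ (p) and all n ∈ ℕ (informally, δ_n(x) = x^n / n!, which lies in (p) for n ≥ 1 because the p-adic valuation of n! is strictly less than n). -/
open Ideal Nat

section Aux

variable {p : ℕ} [hp : Fact p.Prime]

private lemma padicDP_val_lt (n : ℕ) (hn : n ≠ 0) : padicValNat p (n !) < n := by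
  have h := sub_one_mul_padicValNat_factorial (p := p) n
  have hs : (p.digits n).sum ≠ 0 := by
    intro h0
    have hd : p.digits n ≠ [] := Nat.digits_ne_nil_iff_ne_zero.mpr hn
    have hlast := Nat.getLast_digit_ne_zero p hn
    exact hlast (List.sum_eq_zero_iff.mp h0 _ (List.getLast_mem hd))
  have hp2 : 2 ≤ p := hp.out.two_le
  have h2 : padicValNat p (n !) ≤ (p - 1) * padicValNat p (n !) :=
    Nat.le_mul_of_pos_left _ (by omega)
  omega

private lemma padicDP_fac_dvd' (n : ℕ) (hn : n ≠ 0) {x : ℤ_[p]}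
    (hx : x ∈ span {(p : ℤ_[p])}) : (p : ℤ_[p]) * (n ! : ℤ_[p]) ∣ x ^ n := by
  obtain ⟨c, rfl⟩ := mem_span_singleton.mp hx
  rw [mul_pow]
  apply dvd_mul_of_dvd_left
  set v := (n !).factorization p with hv
  have hvv : v = padicValNat p (n !) := Nat.factorization_def _ hp.out
  have hfac : (p : ℕ) ^ v * ((n !) / p ^ v) = n ! :=
    Nat.ordProj_mul_ordCompl_eq_self (n !) p
  have hunit : IsUnit (((n !) / p ^ v : ℕ) : ℤ_[p]) := by
    rw [PadicInt.isUnit_iff]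
    have h1 : ‖(((n !) / p ^ v : ℕ) : ℤ_[p])‖ ≤ 1 := PadicInt.norm_le_one _
    have h2 : ¬ ‖(((n !) / p ^ v : ℕ) : ℤ_[p])‖ < 1 := by
      rw [← Int.cast_natCast, PadicInt.norm_int_lt_one_iff_dvd]
      have := Nat.not_dvd_ordCompl hp.out n.factorial_ne_zero
      exact_mod_cast this
    exact le_antisymm h1 (not_lt.mp h2)
  have hcast : ((n ! : ℕ) : ℤ_[p]) = (p : ℤ_[p]) ^ v * (((n !) / p ^ v : ℕ) : ℤ_[p]) := by
    rw [← Nat.cast_pow, ← Nat.cast_mul, hfac]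
  rw [hcast, ← mul_assoc, ← _root_.pow_succ']
  rw [(hunit.mul_right_dvd (a := (p : ℤ_[p]) ^ (v + 1)) (b := (p : ℤ_[p]) ^ n))]
  exact pow_dvd_pow _ (by have := padicDP_val_lt (p := p) n hn; omega)

private lemma padicDP_fac_dvd (n : ℕ) {x : ℤ_[p]}
    (hx : x ∈ span {(p : ℤ_[p])}) : (n ! : ℤ_[p]) ∣ x ^ n := by
  rcases Nat.eq_zero_or_pos n with rfl | hn
  · simp
  · exact (dvd_mul_left _ _).trans (padicDP_fac_dvd' n (by omega) hx)

end Aux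

open Classical in
noncomputable def padicDPow (p : ℕ) [Fact p.Prime] (n : ℕ) (x : ℤ_[p]) : ℤ_[p] :=
  if h : x ∈ span {(p : ℤ_[p])} then (padicDP_fac_dvd n h).choose else 0

section Key

variable {p : ℕ} [hp : Fact p.Prime]

private lemma padicDPow_key (n : ℕ) {x : ℤ_[p]} (hx : x ∈ span {(p : ℤ_[p])}) :
    (n ! : ℤ_[p]) * padicDPow p n x = x ^ n := by
  rw [padicDPow, dif_pos hx]
  exact (padicDP_fac_dvd n hx).choose_spec.symm

private lemma padicDP_fac_ne (n : ℕ) : ((n ! : ℕ) : ℤ_[p]) ≠ 0 :=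
  Nat.cast_ne_zero.mpr n.factorial_ne_zero

private lemma padicDPow_mem {n : ℕ} (hn : n ≠ 0) {x : ℤ_[p]}
    (hx : x ∈ span {(p : ℤ_[p])}) : padicDPow p n x ∈ span {(p : ℤ_[p])} := by
  obtain ⟨c, hc⟩ := padicDP_fac_dvd' n hn hx
  rw [← padicDPow_key n hx] at hc
  have : padicDPow p n x = (p : ℤ_[p]) * c :=
    mul_left_cancel₀ (padicDP_fac_ne (p := p) n) (by rw [hc]; ring)
  exact mem_span_singleton.mpr ⟨c, this⟩

end Key

/-- The divided power structure on `(p) ⊆ ℤ_p`. -/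
noncomputable def padicDividedPowers (p : ℕ) [hp : Fact p.Prime] :
    DividedPowers (span {(p : ℤ_[p])}) where
  dpow := padicDPow p
  dpow_null {n x} hx := by rw [padicDPow, dif_neg hx]
  dpow_zero {x} hx := by
    have h := padicDPow_key 0 hx
    simpa using h
  dpow_one {x} hx := by
    have h := padicDPow_key 1 hx
    simpa using h
  dpow_mem {n x} hn hx := padicDPow_mem hn hx
  dpow_add n {x y} hx hy := by
    apply mul_left_cancel₀ (padicDP_fac_ne (p := p) n)
    rw [padicDPow_key n (Ideal.add_mem _ hx hy), Finset.mul_sum,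
      Finset.Nat.sum_antidiagonal_eq_sum_range_succ_mk, add_pow]
    refine Finset.sum_congr rfl fun k hk => ?_
    have hkn : k ≤ n := Nat.lt_succ_iff.mp (Finset.mem_range.mp hk)
    have hch : (n.choose k * k ! * (n - k)! : ℕ) = n ! :=
      Nat.choose_mul_factorial_mul_factorial hkn
    calc x ^ k * y ^ (n - k) * (n.choose k : ℤ_[p])
        = (n.choose k : ℤ_[p]) * ((k ! : ℤ_[p]) * padicDPow p k x)
          * (((n - k)! : ℤ_[p]) * padicDPow p (n - k) y) := by
          rw [padicDPow_key k hx, padicDPow_key (n - k) hy]; ring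
      _ = (n ! : ℤ_[p]) * (padicDPow p k x * padicDPow p (n - k) y) := by
          rw [← hch]; push_cast; ring
  dpow_mul n {a x} hx := by
    apply mul_left_cancel₀ (padicDP_fac_ne (p := p) n)
    rw [padicDPow_key n (Ideal.mul_mem_left _ a hx), mul_pow,
      ← padicDPow_key n hx]
    ring
  mul_dpow m n {x} hx := by
    apply mul_left_cancel₀ (padicDP_fac_ne (p := p) (m + n))
    have hch : ((m + n).choose m * m ! * n ! : ℕ) = (m + n)! := by
      rw [Nat.choose_symm_add]
      exact Nat.add_choose_mul_factorial_mul_factorial m n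
    calc ((m + n)! : ℤ_[p]) * (padicDPow p m x * padicDPow p n x)
        = ((m + n).choose m : ℤ_[p]) * ((m ! : ℤ_[p]) * padicDPow p m x)
          * ((n ! : ℤ_[p]) * padicDPow p n x) := by rw [← hch]; push_cast; ring
      _ = ((m + n).choose m : ℤ_[p]) * x ^ (m + n) := by
          rw [padicDPow_key m hx, padicDPow_key n hx]; ring
      _ = ((m + n)! : ℤ_[p]) * (((m + n).choose m : ℤ_[p]) * padicDPow p (m + n) x) := by
          rw [← padicDPow_key (m + n) hx]; ring
  dpow_comp m {n x} hn hx := by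
    have hy : padicDPow p n x ∈ span {(p : ℤ_[p])} := padicDPow_mem hn hx
    apply mul_left_cancel₀ (padicDP_fac_ne (p := p) (m * n))
    have hub : (Nat.uniformBell m n * n ! ^ m * m ! : ℕ) = (m * n)! :=
      Nat.uniformBell_mul_eq m hn
    calc ((m * n)! : ℤ_[p]) * padicDPow p m (padicDPow p n x)
        = (Nat.uniformBell m n : ℤ_[p]) * (n ! : ℤ_[p]) ^ m
          * ((m ! : ℤ_[p]) * padicDPow p m (padicDPow p n x)) := by
          rw [← hub]; push_cast; ring
      _ = (Nat.uniformBell m n : ℤ_[p]) * ((n ! : ℤ_[p]) * padicDPow p n x) ^ m := by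
          rw [padicDPow_key m hy, mul_pow]; ring
      _ = (Nat.uniformBell m n : ℤ_[p]) * x ^ (m * n) := by
          rw [padicDPow_key n hx, ← pow_mul, mul_comm n m]
      _ = ((m * n)! : ℤ_[p]) * ((Nat.uniformBell m n : ℤ_[p]) * padicDPow p (m * n) x) := by
          rw [← padicDPow_key (m * n) hx]; ring

/-- The ideal `(p) ⊆ ℤ_p` carries a divided power structure `δ` with `n! * δ_n x = x ^ n`. -/
theorem exists_dividedPowers_padicInt (p : ℕ) [Fact p.Prime] :
    ∃ δ : DividedPowers (Ideal.span {(p : ℤ_[p])}),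
      ∀ (n : ℕ) (x : ℤ_[p]), x ∈ Ideal.span {(p : ℤ_[p])} →
        (n.factorial : ℤ_[p]) * δ.dpow n x = x ^ n := by
  exact ⟨padicDividedPowers p, fun n x hx => padicDPow_key n hx⟩
end

section
/- Let G be a finite group, k a commutative ring, and W a k-module. Consider the induced representation of G on V := G →₀ W given by left translation: g • f = Finsupp.mapDomain (fun h => g * h) f, and let N : V → V be the norm map N(f) = Σ_{g ∈ G} g • f. Then: (1) the kernel of N equals the k-submodule of V spanned by the elements g • f − f for g ∈ G and f ∈ V; (2) the range of N equals the submodule of G-invariant elements of V. Consequently N descends to a k-linear isomorphism from the coinvariants V_G (the quotient of V by the span of the elements g • f − f) onto the invariants V^G. -/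
/-- The norm map `f ↦ ∑ g, g • f` for the left translation action of `G` on `G →₀ W`. -/
noncomputable def normMap (G : Type*) [Group G] [Fintype G] (k : Type*) [CommRing k]
    (W : Type*) [AddCommGroup W] [Module k W] : (G →₀ W) →ₗ[k] (G →₀ W) :=
  ∑ g : G, Finsupp.lmapDomain W k (fun h => g * h)

/-- The submodule of `G →₀ W` spanned by the elements `g • f - f`. -/
noncomputable def relSub (G : Type*) [Group G] (k : Type*) [CommRing k]
    (W : Type*) [AddCommGroup W] [Module k W] : Submodule k (G →₀ W) :=
  Submodule.span k
    {x : G →₀ W | ∃ (g : G) (f : G →₀ W), x = Finsupp.mapDomain (fun h => g * h) f - f}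

section Aux

set_option linter.unusedSectionVars false
variable {G : Type*} [Group G] [Fintype G] {k : Type*} [CommRing k]
    {W : Type*} [AddCommGroup W] [Module k W]

lemma mapDomain_mul_apply (g : G) (f : G →₀ W) (x : G) :
    Finsupp.mapDomain (fun h => g * h) f x = f (g⁻¹ * x) := by
  have : (fun h => g * h) = ⇑(Equiv.mulLeft g) := rfl
  rw [this, Finsupp.mapDomain_equiv_apply]
  rfl

lemma normMap_apply (f : G →₀ W) (x : G) :
    normMap G k W f x = ∑ h : G, f h := by
  rw [normMap, LinearMap.sum_apply, Finsupp.finset_sum_apply]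
  simp only [Finsupp.lmapDomain_apply, mapDomain_mul_apply]
  exact Fintype.sum_bijective (fun g => g⁻¹ * x)
    ((Equiv.trans (Equiv.inv G) (Equiv.mulRight x)).bijective) _ _ (fun g => rfl)

lemma sum_mapDomain_mul (g : G) (f : G →₀ W) :
    ∑ h : G, Finsupp.mapDomain (fun h => g * h) f h = ∑ h : G, f h := by
  simp only [mapDomain_mul_apply]
  exact Fintype.sum_bijective (fun h => g⁻¹ * h)
    ((Equiv.mulLeft g⁻¹).bijective) _ _ (fun h => rfl)

end Aux

/-- For an induced module `G →₀ W`: the kernel of the norm map is the span of the elements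
`g • f - f`, its range is the submodule of invariants, and consequently the norm induces a
`k`-linear isomorphism from coinvariants onto invariants. -/
theorem norm_coinvariants_equiv_invariants (G : Type*) [Group G] [Fintype G]
    (k : Type*) [CommRing k] (W : Type*) [AddCommGroup W] [Module k W] :
    LinearMap.ker (normMap G k W) = relSub G k W ∧
    (∀ f : G →₀ W, f ∈ LinearMap.range (normMap G k W) ↔
      ∀ g : G, Finsupp.mapDomain (fun h => g * h) f = f) ∧
    ∃ e : ((G →₀ W) ⧸ relSub G k W) ≃ₗ[k] LinearMap.range (normMap G k W),
      ∀ f : G →₀ W, (e (Submodule.Quotient.mk f) : G →₀ W) = normMap G k W f := by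
  have hker : LinearMap.ker (normMap G k W) = relSub G k W := by
    apply le_antisymm
    · intro f hf
      rw [LinearMap.mem_ker] at hf
      have hsum : ∑ h : G, f h = 0 := by
        have := congrArg (fun v : G →₀ W => v 1) hf
        simpa [normMap_apply] using this
      have hf2 : f = ∑ x : G, (Finsupp.single x (f x) - Finsupp.single 1 (f x)) := by
        rw [Finset.sum_sub_distrib, Finsupp.univ_sum_single, ← Finsupp.single_finset_sum,
          hsum, Finsupp.single_zero, sub_zero]
      rw [hf2]
      refine Submodule.sum_mem _ fun x _ => Submodule.subset_span ?_
      exact ⟨x, Finsupp.single 1 (f x), by rw [Finsupp.mapDomain_single, mul_one]⟩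
    · rw [relSub, Submodule.span_le]
      rintro _ ⟨g, f, rfl⟩
      rw [SetLike.mem_coe, LinearMap.mem_ker, map_sub, sub_eq_zero]
      ext x
      rw [normMap_apply, normMap_apply]
      exact sum_mapDomain_mul g f
  have hrange : ∀ f : G →₀ W, f ∈ LinearMap.range (normMap G k W) ↔
      ∀ g : G, Finsupp.mapDomain (fun h => g * h) f = f := by
    intro f
    constructor
    · rintro ⟨u, rfl⟩ g
      ext x
      rw [mapDomain_mul_apply, normMap_apply, normMap_apply]
    · intro hinv
      refine ⟨Finsupp.single 1 (f 1), ?_⟩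
      ext x
      rw [normMap_apply]
      have hc : f x = f 1 := by
        have := congrArg (fun v : G →₀ W => v x) (hinv x)
        simpa [mapDomain_mul_apply] using this.symm
      rw [hc]
      simp [Finsupp.single_apply]
  refine ⟨hker, hrange, ?_⟩
  refine ⟨(Submodule.quotEquivOfEq _ _ hker.symm).trans
    (normMap G k W).quotKerEquivRange, fun f => ?_⟩
  simp [Submodule.quotEquivOfEq_mk, LinearMap.quotKerEquivRange_apply_mk]
end

section
/- Let G be a group, k a commutative ring, W a k-module, and (V, ρ) a representation of G on a k-module V. Equip (G →₀ W) ⊗_k V with the diagonal G-action, where G acts on G →₀ W by left translation (g • f = Finsupp.mapDomain (fun h => g * h) f) and on V via ρ, and equip G →₀ (W ⊗_k V) with the left translation action. Then the k-linear map determined by single g w ⊗ v ↦ single g (w ⊗ ρ(g⁻¹) v) is a G-equivariant k-linear isomorphism from (G →₀ W) ⊗_k V onto G →₀ (W ⊗_k V). -/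
open TensorProduct

/-!
`TensorProduct.finsuppLeft` identifies `(G →₀ W) ⊗ V` with `G →₀ (W ⊗ V)`, on which the diagonal
action becomes "translate, then apply `id ⊗ ρ g` pointwise". Twisting the value at `h` by
`id ⊗ ρ h⁻¹` turns this into plain translation, since `(g * h)⁻¹ * g = h⁻¹`.
-/

namespace Finsupp

variable {G k M : Type*} [Group G] [CommSemiring k] [AddCommMonoid M] [Module k M]

noncomputable def twist (τ : Representation k G M) : (G →₀ M) ≃ₗ[k] (G →₀ M) :=
  LinearEquiv.ofLinearMap (lsum k fun g => lsingle g ∘ₗ τ g⁻¹) (lsum k fun g => lsingle g ∘ₗ τ g)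
    (lhom_ext fun g m => by simp [← Module.End.mul_apply, ← map_mul])
    (lhom_ext fun g m => by simp [← Module.End.mul_apply, ← map_mul])

@[simp]
theorem twist_single (τ : Representation k G M) (g : G) (m : M) :
    twist τ (single g m) = single g (τ g⁻¹ m) := by
  simp [twist]

theorem twist_comp_lmapDomain_comp_mapRange (τ : Representation k G M) (g : G) :
    (twist τ).toLinearMap ∘ₗ lmapDomain M k (g * ·) ∘ₗ mapRange.linearMap (τ g) =
      lmapDomain M k (g * ·) ∘ₗ (twist τ).toLinearMap :=
  lhom_ext fun h m => by simp [← Module.End.mul_apply, ← map_mul, mul_assoc]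

end Finsupp

theorem TensorProduct.finsuppLeft_comp_map {k W V V' ι κ : Type*} [CommSemiring k]
    [AddCommMonoid W] [Module k W] [AddCommMonoid V] [Module k V] [AddCommMonoid V']
    [Module k V'] [DecidableEq ι] [DecidableEq κ] (f : ι → κ) (φ : V →ₗ[k] V') :
    (finsuppLeft k k W V' κ).toLinearMap ∘ₗ map (Finsupp.lmapDomain W k f) φ =
      Finsupp.lmapDomain (W ⊗[k] V') k f ∘ₗ Finsupp.mapRange.linearMap (φ.lTensor W) ∘ₗ
        (finsuppLeft k k W V ι).toLinearMap := by
  ext i w v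
  simp [finsuppLeft_apply_tmul]

/-- Untwisting: for any representation `(V, ρ)` of `G`, the diagonal `G`-action on
`(G →₀ W) ⊗ V` is isomorphic to the left translation action on `G →₀ (W ⊗ V)` via
`single g w ⊗ v ↦ single g (w ⊗ ρ g⁻¹ v)`. -/
theorem induced_tensor_untwisting (G : Type*) [Group G] (k : Type*) [CommRing k]
    (W : Type*) [AddCommGroup W] [Module k W]
    (V : Type*) [AddCommGroup V] [Module k V] (ρ : Representation k G V) :
    ∃ e : ((G →₀ W) ⊗[k] V) ≃ₗ[k] (G →₀ (W ⊗[k] V)),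
      (∀ (g : G) (w : W) (v : V),
        e (Finsupp.single g w ⊗ₜ[k] v) = Finsupp.single g (w ⊗ₜ[k] (ρ g⁻¹) v)) ∧
      (∀ (g : G) (x : (G →₀ W) ⊗[k] V),
        e (TensorProduct.map (Finsupp.lmapDomain W k (fun h => g * h)) (ρ g) x) =
          Finsupp.mapDomain (fun h => g * h) (e x)) := by
  classical
  let τ := (Representation.trivial k G W).tprod ρ
  refine ⟨finsuppLeft k k W V G ≪≫ₗ Finsupp.twist τ, fun g w v => ?_, fun g x => ?_⟩
  · simp [finsuppLeft_apply_tmul, τ]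
  · have untensor := congr($(finsuppLeft_comp_map (W := W) (g * ·) (ρ g)) x)
    have untwist := congr($(Finsupp.twist_comp_lmapDomain_comp_mapRange τ g)
      (finsuppLeft k k W V G x))
    simp only [LinearMap.comp_apply, LinearEquiv.coe_coe] at untensor untwist
    rw [LinearEquiv.trans_apply, untensor]
    exact untwist
end

section
/- Let D denote the ℤ-submodule of ℚ[X] spanned by {X^n / n! : n ∈ ℕ}, which is a subring of ℚ[X], and for each m ∈ ℕ let D^{≥m} denote the ℤ-submodule of ℚ[X] spanned by {X^n / n! : n ≥ m}. Then: (1) each D^{≥m} is an ideal of D; (2) D^{≥m} · D^{≥n} ⊆ D^{≥ m+n} for all m, n ∈ ℕ; (3) for the divided power structure δ on D⁺ = D^{≥1} characterized by k! · δ_k(f) = f^k, one has δ_k(f) ∈ D^{≥ km} for every f ∈ D^{≥m} with m ≥ 1 and every k ≥ 1. -/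
open Polynomial

/-- The `m`-th stage `D^{≥ m}` of the divided power filtration: the `ℤ`-span of the
divided powers `X ^ n / n!` with `n ≥ m`. -/
noncomputable def dpFilt (m : ℕ) : Submodule ℤ (Polynomial ℚ) :=
  Submodule.span ℤ (divPow '' {n : ℕ | m ≤ n})

lemma dpFilt_antitone {m n : ℕ} (h : m ≤ n) : dpFilt n ≤ dpFilt m :=
  Submodule.span_mono (Set.image_mono fun _ hx => le_trans h hx)

lemma dpFilt_mul {m n : ℕ} {f g : Polynomial ℚ} (hf : f ∈ dpFilt m) (hg : g ∈ dpFilt n) :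
    f * g ∈ dpFilt (m + n) := by
  have hle : dpFilt m * dpFilt n ≤ dpFilt (m + n) := by
    rw [dpFilt, dpFilt, Submodule.span_mul_span]
    rw [Submodule.span_le]
    rintro x ⟨-, ⟨a, (ha : m ≤ a), rfl⟩, -, ⟨b, (hb : n ≤ b), rfl⟩, rfl⟩
    show divPow a * divPow b ∈ dpFilt (m + n)
    rw [divPow_mul]
    exact Submodule.smul_mem _ _ (Submodule.subset_span ⟨a + b, Nat.add_le_add ha hb, rfl⟩)
  exact hle (Submodule.mul_mem_mul hf hg)

lemma dpFilt_pow {m k : ℕ} {f : Polynomial ℚ} (hf : f ∈ dpFilt m) : f ^ k ∈ dpFilt (k * m) := by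
  induction k with
  | zero =>
      have h1 : divPow 0 ∈ dpFilt 0 := Submodule.subset_span ⟨0, Set.mem_setOf.mpr le_rfl, rfl⟩
      simpa [divPow] using h1
  | succ k ih =>
      have := dpFilt_mul ih hf
      rw [pow_succ]
      convert this using 2
      ring

lemma coeff_eq_zero_of_mem {m : ℕ} {f : Polynomial ℚ} (hf : f ∈ dpFilt m) {i : ℕ} (hi : i < m) :
    f.coeff i = 0 := by
  induction hf using Submodule.span_induction with
  | mem x hx =>
      obtain ⟨n, hn, rfl⟩ := hx
      have : i ≠ n := Nat.ne_of_lt (lt_of_lt_of_le hi hn)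
      simp [divPow, coeff_X_pow, this]
  | zero => simp
  | add x y _ _ hx hy => simp [hx, hy]
  | smul c x _ hx => simp [hx]

lemma mem_of_coeff {m : ℕ} {f : Polynomial ℚ} (hf : f ∈ dpFilt 0)
    (h : ∀ i < m, f.coeff i = 0) : f ∈ dpFilt m := by
  rw [dpFilt, Finsupp.mem_span_image_iff_linearCombination] at hf ⊢
  obtain ⟨l, hl, rfl⟩ := hf
  refine ⟨l, ?_, rfl⟩
  intro n hn
  show m ≤ n
  by_contra hmn
  push_neg at hmn
  have hc := h n hmn
  have : (Finsupp.linearCombination ℤ divPow l).coeff n = (l n : ℚ) * (n.factorial : ℚ)⁻¹ := by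
    rw [Finsupp.linearCombination_apply, Finsupp.sum, finset_sum_coeff]
    rw [Finset.sum_eq_single n]
    · simp [divPow, coeff_X_pow, mul_comm]
    · intro b _ hb
      simp [divPow, coeff_X_pow, Ne.symm hb]
    · intro hns
      simp [Finsupp.notMem_support_iff.mp hns]
  rw [this] at hc
  have hfac : ((n.factorial : ℚ))⁻¹ ≠ 0 :=
    inv_ne_zero (Nat.cast_ne_zero.mpr n.factorial_ne_zero)
  have : (l n : ℚ) = 0 := by
    rcases mul_eq_zero.mp hc with h' | h'
    · exact h'
    · exact absurd h' hfac
  exact Finsupp.mem_support_iff.mp hn (by exact_mod_cast this)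

/-- The divided power filtration `D^{≥ m}` on `D = ℤ⟨x⟩` consists of ideals, is
multiplicative (`D^{≥m} · D^{≥n} ⊆ D^{≥m+n}`), and is compatible with the divided power
structure `δ` on `D⁺ = D^{≥1}` characterized by `k! * δ_k f = f ^ k`:
`δ_k` carries `D^{≥m}` into `D^{≥ k*m}` for `m, k ≥ 1`. -/
theorem dpFilt_multiplicative_and_dp_compatible :
    (∀ (m : ℕ) (f g : Polynomial ℚ), f ∈ dpFilt 0 → g ∈ dpFilt m → f * g ∈ dpFilt m) ∧
    (∀ (m n : ℕ) (f g : Polynomial ℚ), f ∈ dpFilt m → g ∈ dpFilt n → f * g ∈ dpFilt (m + n)) ∧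
    (∀ S : Subring (Polynomial ℚ), (S : Set (Polynomial ℚ)) = (dpFilt 0 : Set (Polynomial ℚ)) →
      ∀ J : Ideal S, (∀ x : S, x ∈ J ↔ (x : Polynomial ℚ) ∈ dpFilt 1) →
      ∀ δ : DividedPowers J,
        (∀ (n : ℕ) (f : S), f ∈ J → (n.factorial : S) * δ.dpow n f = f ^ n) →
        ∀ (m k : ℕ), 1 ≤ m → 1 ≤ k → ∀ f : S, (f : Polynomial ℚ) ∈ dpFilt m →
          ((δ.dpow k f : S) : Polynomial ℚ) ∈ dpFilt (k * m)) := by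
  refine ⟨?_, fun m n f g hf hg => dpFilt_mul hf hg, ?_⟩
  · intro m f g hf hg
    simpa using dpFilt_mul hf hg
  · intro S hS J hJ δ hδ m k hm hk f hf
    have hfJ : f ∈ J := (hJ f).mpr (dpFilt_antitone hm hf)
    have key := hδ k f hfJ
    have key' : (k.factorial : Polynomial ℚ) * ((δ.dpow k f : S) : Polynomial ℚ)
        = ((f : Polynomial ℚ)) ^ k := by
      have := congrArg (fun x : S => (x : Polynomial ℚ)) key
      push_cast at this
      exact this
    have hpow : ((f : Polynomial ℚ)) ^ k ∈ dpFilt (k * m) := dpFilt_pow hf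
    have hmem0 : ((δ.dpow k f : S) : Polynomial ℚ) ∈ dpFilt 0 := by
      have : ((δ.dpow k f : S) : Polynomial ℚ) ∈ (S : Set (Polynomial ℚ)) := (δ.dpow k f).2
      rw [hS] at this
      exact this
    refine mem_of_coeff hmem0 ?_
    intro i hi
    have hc : ((f : Polynomial ℚ) ^ k).coeff i = 0 := coeff_eq_zero_of_mem hpow hi
    rw [← key'] at hc
    have hkfac : (k.factorial : ℚ) ≠ 0 := Nat.cast_ne_zero.mpr k.factorial_ne_zero
    rw [coeff_natCast_mul] at hc
    exact (mul_eq_zero.mp hc).resolve_left hkfac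
end
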